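/- arXiv:2302.08164 — 4 statements merged into one kernel-verified Lean document; each statement's English description precedes it below -/
import Mathlib

section
/- Every nonzero m-full integer x (i.e., every prime p dividing x satisfies p^m | x) has a unique representation x = ±u^m · ∏_{r=1}^{m-1} v_r^{m+r}, where u, v_1, …, v_{m-1} are positive integers and v_1, …, v_{m-1} are squarefree and pairwise coprime. -/
open Finset

private lemma fact_prod_primes (s : Finset ℕ) (hs : ∀ p ∈ s, p.Prime) (a : ℕ → ℕ) (q : ℕ) :
    (∏ p ∈ s, p ^ a p).factorization q = if q ∈ s then a q else 0 := by
  classical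
  rw [Nat.factorization_prod (fun p hp => pow_ne_zero _ (hs p hp).pos.ne')]
  rw [Finsupp.finset_sum_apply]
  have h : ∀ p ∈ s, (p ^ a p).factorization q = if p = q then a p else 0 := fun p hp => by
    rw [Nat.Prime.factorization_pow (hs p hp), Finsupp.single_apply]
  rw [Finset.sum_congr rfl h, Finset.sum_ite_eq' s q a]

private lemma prodFact (m : ℕ) (u : ℕ) (v : Fin (m - 1) → ℕ) (hu : 0 < u)
    (hv : ∀ r, 0 < v r) (q : ℕ) :
    (u ^ m * ∏ r : Fin (m - 1), v r ^ (m + (r : ℕ) + 1)).factorization q =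
      m * u.factorization q + ∑ r : Fin (m - 1), (m + (r : ℕ) + 1) * (v r).factorization q := by
  rw [Nat.factorization_mul (pow_ne_zero _ hu.ne') (Finset.prod_ne_zero_iff.mpr
    (fun r _ => pow_ne_zero _ (hv r).ne')),
    Nat.factorization_pow, Nat.factorization_prod (fun r _ => pow_ne_zero _ (hv r).ne')]
  simp [Finsupp.finset_sum_apply, Nat.factorization_pow, mul_comm]

private lemma nat_exists (m : ℕ) (hm : 2 ≤ m) (n : ℕ) (hn : n ≠ 0)
    (hfull : ∀ p : ℕ, p.Prime → p ∣ n → m ≤ n.factorization p) :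
    ∃ u : ℕ, ∃ v : Fin (m - 1) → ℕ, 0 < u ∧ (∀ r, 0 < v r) ∧ (∀ r, Squarefree (v r)) ∧
      (∀ r r', r ≠ r' → Nat.Coprime (v r) (v r')) ∧
      n = u ^ m * ∏ r : Fin (m - 1), v r ^ (m + (r : ℕ) + 1) := by
  classical
  set f := n.factorization with hf
  set S : Fin (m - 1) → Finset ℕ :=
    fun r => n.primeFactors.filter (fun p => f p % m = (r : ℕ) + 1) with hS
  set v : Fin (m - 1) → ℕ := fun r => ∏ p ∈ S r, p with hv
  set u : ℕ := ∏ p ∈ n.primeFactors, p ^ (f p / m - (if f p % m = 0 then 0 else 1)) with hu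
  have hSprime : ∀ r, ∀ p ∈ S r, p.Prime := fun r p hp =>
    Nat.prime_of_mem_primeFactors (Finset.mem_filter.mp hp).1
  have hSmem : ∀ r p, p ∈ S r ↔ p ∈ n.primeFactors ∧ f p % m = (r : ℕ) + 1 := fun r p =>
    Finset.mem_filter
  have hupos : 0 < u := Finset.prod_pos fun p hp =>
    pow_pos (Nat.prime_of_mem_primeFactors hp).pos _
  have hvpos : ∀ r, 0 < v r := fun r => Finset.prod_pos fun p hp => (hSprime r p hp).pos
  -- factorization of v r
  have hvfact : ∀ r q, (v r).factorization q = if q ∈ S r then 1 else 0 := by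
    intro r q
    have := fact_prod_primes (S r) (hSprime r) (fun _ => 1) q
    simpa using this
  have hufact : ∀ q, u.factorization q =
      if q ∈ n.primeFactors then f q / m - (if f q % m = 0 then 0 else 1) else 0 := fun q =>
    fact_prod_primes n.primeFactors (fun p hp => Nat.prime_of_mem_primeFactors hp) _ q
  refine ⟨u, v, hupos, hvpos, ?_, ?_, ?_⟩
  · intro r
    rw [Nat.squarefree_iff_factorization_le_one (hvpos r).ne']
    intro q
    rw [hvfact r q]
    split <;> omega
  · intro r r' hne
    apply Nat.Coprime.prod_left
    intro p hp
    apply Nat.Coprime.prod_right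
    intro p' hp'
    rw [Nat.coprime_primes (hSprime r p hp) (hSprime r' p' hp')]
    intro hpp
    subst hpp
    have h1 := (hSmem r p).mp hp
    have h2 := (hSmem r' p).mp hp'
    have : (r : ℕ) = (r' : ℕ) := by omega
    exact hne (Fin.ext this)
  · refine Nat.eq_of_factorization_eq hn
      (Nat.mul_ne_zero (pow_ne_zero _ hupos.ne')
        (Finset.prod_ne_zero_iff.mpr (fun r _ => pow_ne_zero _ (hvpos r).ne'))) ?_
    intro q
    rw [prodFact m u v hupos hvpos q, hufact q]
    by_cases hmem : q ∈ n.primeFactors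
    · have hqp : q.Prime := Nat.prime_of_mem_primeFactors hmem
      have hqd : q ∣ n := Nat.dvd_of_mem_primeFactors hmem
      have hge : m ≤ f q := hfull q hqp hqd
      have hdm := Nat.div_add_mod (f q) m
      have hdiv1 : 1 ≤ f q / m := Nat.one_le_div_iff (by omega) |>.mpr hge
      rw [if_pos hmem]
      by_cases hz : f q % m = 0
      · have hsum0 : (∑ r : Fin (m - 1), (m + (r : ℕ) + 1) * (v r).factorization q) = 0 := by
          apply Finset.sum_eq_zero
          intro r _
          rw [hvfact r q, if_neg, mul_zero]
          rw [hSmem r q]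
          rintro ⟨-, h⟩
          omega
        rw [if_pos hz, hsum0, add_zero, Nat.sub_zero, Nat.mul_div_cancel'
          (Nat.dvd_of_mod_eq_zero hz)]
      · have hsmall : f q % m < m := Nat.mod_lt _ (by omega)
        set s := f q % m with hsdef
        have hs1 : 1 ≤ s := by omega
        have hslt : s - 1 < m - 1 := by omega
        set r0 : Fin (m - 1) := ⟨s - 1, hslt⟩ with hr0
        have hr0v : (r0 : ℕ) + 1 = s := by simp [hr0]; omega
        have hsum : (∑ r : Fin (m - 1), (m + (r : ℕ) + 1) * (v r).factorization q)
            = m + (r0 : ℕ) + 1 := by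
          rw [Finset.sum_eq_single r0]
          · rw [hvfact r0 q, if_pos ((hSmem r0 q).mpr ⟨hmem, hr0v.symm ▸ rfl⟩), mul_one]
          · intro r _ hne
            rw [hvfact r q, if_neg, mul_zero]
            rw [hSmem r q]
            rintro ⟨-, h⟩
            apply hne
            apply Fin.ext
            omega
          · simp
        rw [if_neg hz, hsum]
        obtain ⟨j, hj⟩ : ∃ j, f q / m = j + 1 := ⟨f q / m - 1, by omega⟩
        rw [hj] at hdm
        rw [hj]
        simp only [Nat.add_sub_cancel]
        rw [← hdm, Nat.mul_add, Nat.mul_one]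
        generalize m * j = t
        omega
    · rw [if_neg hmem, Nat.mul_zero, Nat.zero_add]
      have hfq : f q = 0 := Finsupp.notMem_support_iff.mp
        (by rw [hf, Nat.support_factorization]; exact hmem)
      rw [hfq]
      symm
      apply Finset.sum_eq_zero
      intro r _
      rw [hvfact r q, if_neg (fun h => hmem (Finset.mem_filter.mp h).1), mul_zero]

private lemma tupleFact (m : ℕ) (hm : 2 ≤ m) (u : ℕ) (v : Fin (m - 1) → ℕ)
    (hu : 0 < u) (hv : ∀ r, 0 < v r) (hsq : ∀ r, Squarefree (v r))
    (hcop : ∀ r r', r ≠ r' → Nat.Coprime (v r) (v r')) (q : ℕ) (hq : q.Prime) (r : Fin (m - 1)) :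
    (v r).factorization q =
      if (u ^ m * ∏ r : Fin (m - 1), v r ^ (m + (r : ℕ) + 1)).factorization q % m = (r : ℕ) + 1
      then 1 else 0 := by
  rw [prodFact m u v hu hv q]
  have hb1 : ∀ r', (v r').factorization q ≤ 1 := fun r' =>
    (Nat.squarefree_iff_factorization_le_one (hv r').ne').mp (hsq r') q
  have hdisj : ∀ r' r'', r' ≠ r'' → (v r').factorization q ≠ 0 → (v r'').factorization q = 0 := by
    intro r' r'' hne h'
    by_contra h''
    have d' : q ∣ v r' := Nat.dvd_of_factorization_pos h'
    have d'' : q ∣ v r'' := Nat.dvd_of_factorization_pos h''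
    have : q ∣ 1 := (hcop r' r'' hne) ▸ Nat.dvd_gcd d' d''
    exact hq.ne_one (Nat.dvd_one.mp this)
  have hsum : ∀ r0 : Fin (m - 1), (v r0).factorization q = 1 →
      (∑ r' : Fin (m - 1), (m + (r' : ℕ) + 1) * (v r').factorization q) = m + (r0 : ℕ) + 1 := by
    intro r0 h0
    rw [Finset.sum_eq_single r0]
    · rw [h0, mul_one]
    · intro r' _ hne
      rw [hdisj r0 r' (Ne.symm hne) (by rw [h0]; exact one_ne_zero), mul_zero]
    · simp
  by_cases hz : ∀ r', (v r').factorization q = 0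
  · have : (∑ r' : Fin (m - 1), (m + (r' : ℕ) + 1) * (v r').factorization q) = 0 := by
      simp [hz]
    rw [this, hz r, add_zero]
    rw [if_neg]
    rw [Nat.mul_mod_right]
    omega
  · push_neg at hz
    obtain ⟨r0, hr0⟩ := hz
    have hr01 : (v r0).factorization q = 1 := le_antisymm (hb1 r0) (Nat.one_le_iff_ne_zero.mpr hr0)
    rw [hsum r0 hr01]
    have hmod : (m * u.factorization q + (m + (r0 : ℕ) + 1)) % m = (r0 : ℕ) + 1 := by
      have h1 : (r0 : ℕ) + 1 < m := by have := r0.isLt; omega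
      rw [show m * u.factorization q + (m + (r0 : ℕ) + 1)
          = m * (u.factorization q + 1) + ((r0 : ℕ) + 1) by ring]
      rw [Nat.mul_add_mod, Nat.mod_eq_of_lt h1]
    rw [hmod]
    by_cases hrr : r = r0
    · subst hrr; rw [if_pos rfl, hr01]
    · rw [if_neg, hdisj r0 r (Ne.symm hrr) (by omega)]
      have : (r : ℕ) ≠ (r0 : ℕ) := fun h => hrr (Fin.ext h)
      omega

private lemma nat_unique (m : ℕ) (hm : 2 ≤ m) (u u' : ℕ) (v v' : Fin (m - 1) → ℕ)
    (hu : 0 < u) (hu' : 0 < u') (hv : ∀ r, 0 < v r) (hv' : ∀ r, 0 < v' r)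
    (hsq : ∀ r, Squarefree (v r)) (hsq' : ∀ r, Squarefree (v' r))
    (hcop : ∀ r r', r ≠ r' → Nat.Coprime (v r) (v r'))
    (hcop' : ∀ r r', r ≠ r' → Nat.Coprime (v' r) (v' r'))
    (heq : u ^ m * ∏ r : Fin (m - 1), v r ^ (m + (r : ℕ) + 1)
         = u' ^ m * ∏ r : Fin (m - 1), v' r ^ (m + (r : ℕ) + 1)) :
    u = u' ∧ v = v' := by
  have hvv : v = v' := by
    funext r
    refine Nat.eq_of_factorization_eq (hv r).ne' (hv' r).ne' fun q => ?_
    by_cases hq : q.Prime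
    · rw [tupleFact m hm u v hu hv hsq hcop q hq r,
        tupleFact m hm u' v' hu' hv' hsq' hcop' q hq r, heq]
    · rw [Nat.factorization_eq_zero_of_not_prime _ hq,
        Nat.factorization_eq_zero_of_not_prime _ hq]
  refine ⟨?_, hvv⟩
  rw [hvv] at heq
  have hP : (∏ r : Fin (m - 1), v' r ^ (m + (r : ℕ) + 1)) ≠ 0 :=
    Finset.prod_ne_zero_iff.mpr (fun r _ => pow_ne_zero _ (hv' r).ne')
  have hpow : u ^ m = u' ^ m :=
    Nat.eq_of_mul_eq_mul_right (Nat.pos_of_ne_zero hP) heq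
  exact Nat.pow_left_injective (by omega) hpow

/-- Every nonzero `m`-full integer has a unique representation
`x = ± u^m * ∏_{r=1}^{m-1} v_r^{m+r}` with `u, v_r` positive integers and
the `v_r` squarefree and pairwise coprime. -/
theorem mfull_unique_representation (m : ℕ) (hm : 2 ≤ m) (x : ℤ) (hx : x ≠ 0)
    (hfull : ∀ p : ℕ, p.Prime → (p : ℤ) ∣ x → (p : ℤ) ^ m ∣ x) :
    ∃! t : ℤ × ℕ × (Fin (m - 1) → ℕ),
      (t.1 = 1 ∨ t.1 = -1) ∧ 0 < t.2.1 ∧ (∀ r, 0 < t.2.2 r) ∧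
      (∀ r, Squarefree (t.2.2 r)) ∧
      (∀ r r', r ≠ r' → Nat.Coprime (t.2.2 r) (t.2.2 r')) ∧
      x = t.1 * (t.2.1 : ℤ) ^ m * ∏ r : Fin (m - 1), (t.2.2 r : ℤ) ^ (m + (r : ℕ) + 1) := by
  set n : ℕ := x.natAbs with hn
  have hn0 : n ≠ 0 := Int.natAbs_ne_zero.mpr hx
  have hfull' : ∀ p : ℕ, p.Prime → p ∣ n → m ≤ n.factorization p := by
    intro p hp hpd
    have h1 : (p : ℤ) ∣ x := (Int.natCast_dvd_natCast.mpr hpd).trans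
      (Int.natAbs_dvd.mpr (dvd_refl x))
    have h2 : (p : ℤ) ^ m ∣ x := hfull p hp h1
    have h3 : (p : ℕ) ^ m ∣ n := by
      have := Int.natAbs_dvd_natAbs.mpr h2
      rwa [Int.natAbs_pow, Int.natAbs_natCast] at this
    exact (Nat.Prime.pow_dvd_iff_le_factorization hp hn0).mp h3
  obtain ⟨u, v, hupos, hvpos, hsq, hcop, hprod⟩ := nat_exists m hm n hn0 hfull'
  have hsign : x.sign = 1 ∨ x.sign = -1 := by
    rcases lt_or_gt_of_ne hx with h | h
    · right; exact Int.sign_eq_neg_one_of_neg h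
    · left; exact Int.sign_eq_one_of_pos h
  have hprodZ : (n : ℤ) = (u : ℤ) ^ m * ∏ r : Fin (m - 1), (v r : ℤ) ^ (m + (r : ℕ) + 1) := by
    rw [hprod]; push_cast; ring
  refine ⟨⟨x.sign, u, v⟩, ⟨hsign, hupos, hvpos, hsq, hcop, ?_⟩, ?_⟩
  · rw [mul_assoc, ← hprodZ]
    exact (Int.sign_mul_natAbs x).symm
  · rintro ⟨ε, u', v'⟩ ⟨hε, hu', hv', hsq', hcop', hxeq⟩
    dsimp only at *
    have hNpos : (0 : ℤ) < (u' : ℤ) ^ m * ∏ r : Fin (m - 1), (v' r : ℤ) ^ (m + (r : ℕ) + 1) := by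
      apply mul_pos
      · exact pow_pos (by exact_mod_cast hu') m
      · exact Finset.prod_pos fun r _ => pow_pos (by exact_mod_cast hv' r) _
    have hεsign : ε = x.sign := by
      rcases hε with h | h
      · subst h
        rw [one_mul] at hxeq
        exact (Int.sign_eq_one_of_pos (hxeq ▸ hNpos)).symm
      · subst h
        have hneg : x < 0 := by
          rw [hxeq]
          have : (-1 : ℤ) * (u' : ℤ) ^ m * ∏ r : Fin (m - 1), (v' r : ℤ) ^ (m + (r : ℕ) + 1)
              = -((u' : ℤ) ^ m * ∏ r : Fin (m - 1), (v' r : ℤ) ^ (m + (r : ℕ) + 1)) := by ring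
          rw [this]
          exact neg_neg_of_pos hNpos
        exact (Int.sign_eq_neg_one_of_neg hneg).symm
    have hsne : (x.sign : ℤ) ≠ 0 := by rcases hsign with h | h <;> simp [h]
    have hA : (u' : ℤ) ^ m * ∏ r : Fin (m - 1), (v' r : ℤ) ^ (m + (r : ℕ) + 1)
        = (u : ℤ) ^ m * ∏ r : Fin (m - 1), (v r : ℤ) ^ (m + (r : ℕ) + 1) := by
      apply mul_left_cancel₀ hsne
      calc x.sign * ((u' : ℤ) ^ m * ∏ r : Fin (m - 1), (v' r : ℤ) ^ (m + (r : ℕ) + 1))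
          = ε * (u' : ℤ) ^ m * ∏ r : Fin (m - 1), (v' r : ℤ) ^ (m + (r : ℕ) + 1) := by
            rw [hεsign]; ring
        _ = x := hxeq.symm
        _ = x.sign * (x.natAbs : ℤ) := (Int.sign_mul_natAbs x).symm
        _ = x.sign * ((u : ℤ) ^ m * ∏ r : Fin (m - 1), (v r : ℤ) ^ (m + (r : ℕ) + 1)) := by
            rw [← hprodZ]
    have hAnat : u' ^ m * ∏ r : Fin (m - 1), v' r ^ (m + (r : ℕ) + 1)
        = u ^ m * ∏ r : Fin (m - 1), v r ^ (m + (r : ℕ) + 1) := by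
      have : ((u' ^ m * ∏ r : Fin (m - 1), v' r ^ (m + (r : ℕ) + 1) : ℕ) : ℤ)
          = ((u ^ m * ∏ r : Fin (m - 1), v r ^ (m + (r : ℕ) + 1) : ℕ) : ℤ) := by
        push_cast
        exact hA
      exact_mod_cast this
    obtain ⟨huu, hvv⟩ := nat_unique m hm u' u v' v (by exact_mod_cast hu') hupos hv' hvpos
      hsq' hsq hcop' hcop hAnat
    simp only [Prod.mk.injEq]
    exact ⟨hεsign, huu, hvv⟩
end

section
/- Let k ≥ 2 and m₀, …, m_n ≥ 2 be integers. If ∑_{i=0}^n 1/(2·s₀(k·m_i)) > 1, then ∑_{i=0}^n 1/(k·m_i) > 3. -/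
/-- `s₀(m) = min{2^(m-1), m(m-1)/2 + ⌊√(2m+2)⌋}`. -/
def s0 (m : ℕ) : ℕ := min (2 ^ (m - 1)) (m * (m - 1) / 2 + Nat.sqrt (2 * m + 2))

lemma three_mul_le_two_pow (M : ℕ) (h : 4 ≤ M) : 3 * M ≤ 2 ^ M := by
  induction M, h using Nat.le_induction with
  | base => norm_num
  | succ M hM ih =>
    have h3 : 3 ≤ 2 ^ M := le_trans (by omega : 3 ≤ 3 * M) ih
    rw [pow_succ]; omega

lemma key_nat (M : ℕ) (h : 4 ≤ M) : 3 * M ≤ 2 * s0 M := by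
  unfold s0
  have h1 : 3 * M ≤ 2 * 2 ^ (M - 1) := by
    have := three_mul_le_two_pow M h
    have h2 : 2 * 2 ^ (M - 1) = 2 ^ M := by
      rw [← pow_succ']; congr 1; omega
    omega
  have h2 : 3 * M ≤ 2 * (M * (M - 1) / 2 + Nat.sqrt (2 * M + 2)) := by
    have heven : 2 ∣ M * (M - 1) := (Nat.even_mul_pred_self M).two_dvd
    have he : 2 * (M * (M - 1) / 2) = M * (M - 1) := by omega
    have h3 : 3 * M ≤ M * (M - 1) := by
      have : M * 3 ≤ M * (M - 1) := Nat.mul_le_mul_left M (by omega)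
      omega
    omega
  rcases min_cases (2 ^ (M - 1)) (M * (M - 1) / 2 + Nat.sqrt (2 * M + 2)) with
    ⟨hmin, _⟩ | ⟨hmin, _⟩ <;> rw [hmin] <;> assumption

/-- If `k ≥ 2`, all `m i ≥ 2` and `∑ 1/(2 s₀(k m_i)) > 1`, then `∑ 1/(k m_i) > 3`. -/
theorem sum_inv_km_gt_three (n k : ℕ) (m : Fin (n + 1) → ℕ) (hk : 2 ≤ k)
    (hm : ∀ i, 2 ≤ m i)
    (hsum : (1 : ℝ) < ∑ i, (1 : ℝ) / (2 * s0 (k * m i))) :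
    (3 : ℝ) < ∑ i, (1 : ℝ) / (k * m i) := by
  have h4 : ∀ i, 4 ≤ k * m i := fun i =>
    le_trans (by norm_num) (Nat.mul_le_mul hk (hm i))
  have hkey : ∀ i, 3 * ((1 : ℝ) / (2 * s0 (k * m i))) ≤ (1 : ℝ) / (k * m i) := by
    intro i
    set M := k * m i with hM
    have hM4 : 4 ≤ M := h4 i
    have hn := key_nat M hM4
    have hs : 0 < s0 M := by omega
    have hsR : (0 : ℝ) < s0 M := by exact_mod_cast hs
    have hA : (0 : ℝ) < 2 * (s0 M : ℝ) := by linarith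
    have hB : (0 : ℝ) < (k : ℝ) * (m i : ℝ) := by
      have hk' : (0 : ℝ) < (k : ℝ) := by exact_mod_cast (by omega : 0 < k)
      have hm' : (0 : ℝ) < (m i : ℝ) := by exact_mod_cast (by have := hm i; omega : 0 < m i)
      exact mul_pos hk' hm'
    rw [mul_one_div, div_le_div_iff₀ hA hB]
    have hnR : (3 : ℝ) * M ≤ 2 * (s0 M : ℝ) := by exact_mod_cast hn
    rw [hM] at hnR
    push_cast at hnR ⊢
    linarith
  calc (3 : ℝ) = 3 * 1 := by ring
    _ < 3 * ∑ i, (1 : ℝ) / (2 * s0 (k * m i)) := by linarith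
    _ = ∑ i, 3 * ((1 : ℝ) / (2 * s0 (k * m i))) := by rw [Finset.mul_sum]
    _ ≤ ∑ i, (1 : ℝ) / (k * m i) := Finset.sum_le_sum fun i _ => hkey i
end

section
/- For every real X ≥ 1 and every integer m ≥ 2, the number of m-full positive integers at most X is O(X^{1/m}), with implicit constant depending only on m. -/
/-!
Split each exponent `e ≥ m` of an `m`-full number as `m + ⋯ + m + (m + s)` with `0 ≤ s < m`: every
`m`-full number is then a product of `e`-th powers with `m ≤ e < 2m`, one base per exponent. The
`m`-th powers up to `Y` number at most `Y^{1/m}`, and adjoining the `e`-th powers `w^e` with `e > m`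
multiplies the count by at most `∑_w w^{-e/m} < ∞`, because `(Y / w^e)^{1/m} = Y^{1/m} w^{-e/m}`.
-/

open Finset

noncomputable def countLE (S : Set ℕ) (Y : ℝ) : ℕ :=
  Nat.card {x : ℕ | 0 < x ∧ (x : ℝ) ≤ Y ∧ x ∈ S}

def HasCountBound (S : Set ℕ) (θ : ℝ) : Prop :=
  ∃ C > 0, ∀ Y : ℝ, 0 ≤ Y → (countLE S Y : ℝ) ≤ C * Y ^ θ

lemma countLE_eq_card {S : Set ℕ} [DecidablePred (· ∈ S)] {Y : ℝ} (hY : 0 ≤ Y) :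
    countLE S Y = #{x ∈ Icc 1 ⌊Y⌋₊ | x ∈ S} := by
  have hset : {x : ℕ | 0 < x ∧ (x : ℝ) ≤ Y ∧ x ∈ S} = ↑{x ∈ Icc 1 ⌊Y⌋₊ | x ∈ S} := by
    ext x
    simp [Nat.le_floor_iff hY, Nat.one_le_iff_ne_zero, Nat.pos_iff_ne_zero, and_assoc]
  rw [countLE, hset, Nat.card_coe_set_eq, Set.ncard_coe_finset]

lemma countLE_mono {S T : Set ℕ} (hST : S ⊆ T) (Y : ℝ) : countLE S Y ≤ countLE T Y :=
  Nat.card_mono ((Set.finite_Iic ⌊Y⌋₊).subset fun _ hx => Nat.le_floor hx.2.1)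
    fun _ ⟨hx0, hxY, hxS⟩ => ⟨hx0, hxY, hST hxS⟩

lemma HasCountBound.mono {S T : Set ℕ} {θ : ℝ} (hT : HasCountBound T θ) (hST : S ⊆ T) :
    HasCountBound S θ :=
  let ⟨C, hC, hbound⟩ := hT
  ⟨C, hC, fun Y hY => (Nat.cast_le.2 (countLE_mono hST Y)).trans (hbound Y hY)⟩

def nthPowers (e : ℕ) : Submonoid ℕ := MonoidHom.mrange (powMonoidHom e)

lemma mem_nthPowers {e x : ℕ} : x ∈ nthPowers e ↔ ∃ w, w ^ e = x := Iff.rfl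

lemma pow_mem_nthPowers (a e : ℕ) : a ^ e ∈ nthPowers e := ⟨a, rfl⟩

lemma hasCountBound_nthPowers {m : ℕ} (hm : m ≠ 0) :
    HasCountBound (nthPowers m) (1 / m) := by
  classical
  refine ⟨1, one_pos, fun Y hY => ?_⟩
  have hsub : {x ∈ Icc 1 ⌊Y⌋₊ | x ∈ nthPowers m}
      ⊆ (Icc 1 ⌊Y ^ (1 / m : ℝ)⌋₊).image (· ^ m) := by
    intro x hx
    simp only [mem_filter, mem_Icc, mem_nthPowers] at hx
    obtain ⟨⟨hx1, hxY⟩, u, rfl⟩ := hx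
    have hu : 0 < u := Nat.pos_of_ne_zero fun hu => by simp [hu, hm] at hx1
    have huY : (u : ℝ) ^ m ≤ Y := by exact_mod_cast (Nat.le_floor_iff hY).1 hxY
    refine mem_image.2 ⟨u, mem_Icc.2 ⟨hu, Nat.le_floor ?_⟩, rfl⟩
    rw [one_div, Real.le_rpow_inv_iff_of_pos (by positivity) hY (by positivity)]
    exact_mod_cast huY
  calc (countLE (nthPowers m) Y : ℝ)
      ≤ #(Icc 1 ⌊Y ^ (1 / m : ℝ)⌋₊) := by
        rw [countLE_eq_card hY]
        exact_mod_cast (card_le_card hsub).trans card_image_le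
    _ ≤ 1 * Y ^ (1 / m : ℝ) := by
        rw [Nat.card_Icc, add_tsub_cancel_right, one_mul]
        exact Nat.floor_le (by positivity)

lemma countLE_sup_nthPowers_le (S : Submonoid ℕ) {e : ℕ} (he : e ≠ 0) {Y : ℝ} (hY : 0 ≤ Y) :
    countLE ↑(S ⊔ nthPowers e) Y ≤ ∑ w ∈ Icc 1 ⌊Y⌋₊, countLE S (Y / w ^ e) := by
  classical
  simp only [countLE_eq_card hY,
    countLE_eq_card (div_nonneg hY (pow_nonneg (Nat.cast_nonneg _) e))]
  refine (card_le_card (t := (Icc 1 ⌊Y⌋₊).biUnion fun w =>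
    {y ∈ Icc 1 ⌊Y / w ^ e⌋₊ | y ∈ S}.image (· * w ^ e)) ?_).trans
    (card_biUnion_le.trans (sum_le_sum fun w _ => card_image_le))
  intro x hx
  simp only [mem_filter, mem_Icc, SetLike.mem_coe, Submonoid.mem_sup, mem_nthPowers] at hx
  obtain ⟨⟨hx1, hxY⟩, y, hy, _, ⟨w, rfl⟩, rfl⟩ := hx
  have hy0 : 0 < y := Nat.pos_of_mul_pos_right hx1
  have hw0 : 0 < w := (pow_pos_iff he).1 (Nat.pos_of_mul_pos_left hx1)
  have hyw : (y : ℝ) * w ^ e ≤ Y := by exact_mod_cast (Nat.le_floor_iff hY).1 hxY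
  simp only [mem_biUnion, mem_image, mem_filter, mem_Icc]
  refine ⟨w, ⟨hw0, (Nat.le_self_pow he w).trans ((Nat.le_mul_of_pos_left _ hy0).trans hxY)⟩,
    y, ⟨⟨hy0, Nat.le_floor ?_⟩, hy⟩, rfl⟩
  rwa [le_div_iff₀ (by positivity)]

lemma HasCountBound.sup_nthPowers {S : Submonoid ℕ} {θ : ℝ} (hS : HasCountBound S θ)
    {e : ℕ} (he : 1 < e * θ) : HasCountBound ↑(S ⊔ nthPowers e) θ := by
  obtain ⟨C, hC, hbound⟩ := hS
  have he0 : e ≠ 0 := by rintro rfl; norm_num at he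
  have hsum : Summable fun w : ℕ => 1 / (w : ℝ) ^ (e * θ) := Real.summable_one_div_nat_rpow.2 he
  refine ⟨C * ∑' w : ℕ, 1 / (w : ℝ) ^ (e * θ),
    mul_pos hC (hsum.tsum_pos (fun _ => by positivity) 1 (by simp)), fun Y hY => ?_⟩
  calc (countLE ↑(S ⊔ nthPowers e) Y : ℝ)
      ≤ ∑ w ∈ Icc 1 ⌊Y⌋₊, (countLE S (Y / w ^ e) : ℝ) := by
        exact_mod_cast countLE_sup_nthPowers_le S he0 hY
    _ ≤ ∑ w ∈ Icc 1 ⌊Y⌋₊, C * Y ^ θ * (1 / (w : ℝ) ^ (e * θ)) := by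
        refine sum_le_sum fun w _ => (hbound _ (by positivity)).trans_eq ?_
        rw [Real.div_rpow hY (by positivity), ← Real.rpow_natCast, ← Real.rpow_mul (by positivity)]
        ring
    _ ≤ C * Y ^ θ * ∑' w : ℕ, 1 / (w : ℝ) ^ (e * θ) := by
        rw [← mul_sum]
        gcongr
        exact hsum.sum_le_tsum _ fun _ _ => by positivity
    _ = C * (∑' w : ℕ, 1 / (w : ℝ) ^ (e * θ)) * Y ^ θ := by ring

lemma HasCountBound.sup_finsetSup_nthPowers {S : Submonoid ℕ} {θ : ℝ}
    (hS : HasCountBound S θ) (E : Finset ℕ) (hE : ∀ e ∈ E, 1 < e * θ) :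
    HasCountBound ↑(S ⊔ E.sup nthPowers) θ := by
  induction E using Finset.induction_on with
  | empty => simpa using hS
  | insert e E _ ih =>
    rw [sup_insert, ← sup_assoc, sup_right_comm]
    exact (ih fun e' he' => hE e' (mem_insert_of_mem he')).sup_nthPowers
      (hE e (mem_insert_self e E))

/-- The numbers `u^m v₁^{m+1} ⋯ v_{m-1}^{2m-1}` of the parametrization. -/
def mfullParam (m : ℕ) : Submonoid ℕ :=
  nthPowers m ⊔ (Ioo m (2 * m)).sup nthPowers

lemma pow_mem_mfullParam {m : ℕ} (hm : m ≠ 0) (a : ℕ) {e : ℕ} (he : m ≤ e) :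
    a ^ e ∈ mfullParam m := by
  induction e using Nat.strong_induction_on with
  | _ e ih =>
    rcases lt_or_ge e (2 * m) with h | h
    · rcases he.eq_or_lt with rfl | hlt
      · exact Submonoid.mem_sup_left (pow_mem_nthPowers a m)
      · exact Submonoid.mem_sup_right
          (le_sup (f := nthPowers) (mem_Ioo.2 ⟨hlt, h⟩) (pow_mem_nthPowers a e))
    · rw [show e = m + (e - m) by omega, pow_add]
      exact mul_mem (Submonoid.mem_sup_left (pow_mem_nthPowers a m)) (ih _ (by omega) (by omega))

lemma mem_mfullParam_of_forall_prime_dvd {m x : ℕ} (hm : m ≠ 0)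
    (hx : ∀ p : ℕ, p.Prime → p ∣ x → p ^ m ∣ x) : x ∈ mfullParam m := by
  rcases eq_or_ne x 0 with rfl | hx0
  · simpa [zero_pow hm] using pow_mem_mfullParam hm 0 le_rfl
  rw [← Nat.prod_factorization_pow_eq_self hx0]
  refine SubmonoidClass.finsuppProd_mem _ _ _ fun p hp => pow_mem_mfullParam hm p ?_
  have hp' : p.Prime :=
    Nat.prime_of_mem_primeFactors (Nat.support_factorization x ▸ Finsupp.mem_support_iff.2 hp)
  exact (hp'.pow_dvd_iff_le_factorization hx0).1 (hx p hp' (Nat.dvd_of_factorization_pos hp))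

lemma hasCountBound_mfullParam {m : ℕ} (hm : m ≠ 0) : HasCountBound (mfullParam m) (1 / m) :=
  (hasCountBound_nthPowers hm).sup_finsetSup_nthPowers _ fun e he => by
    rw [mul_one_div, one_lt_div (by positivity)]
    exact_mod_cast (mem_Ioo.1 he).1

/-- The number of `m`-full positive integers up to `X` is `O(X^{1/m})`. -/
theorem count_mfull_le (m : ℕ) (hm : 2 ≤ m) :
    ∃ C : ℝ, 0 < C ∧ ∀ X : ℝ, 1 ≤ X →
      (Nat.card {x : ℕ | 0 < x ∧ (x : ℝ) ≤ X ∧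
          ∀ p : ℕ, p.Prime → p ∣ x → p ^ m ∣ x} : ℝ) ≤ C * X ^ ((1 : ℝ) / m) := by
  have hfull : HasCountBound {x | ∀ p : ℕ, p.Prime → p ∣ x → p ^ m ∣ x} (1 / m) :=
    (hasCountBound_mfullParam (by omega)).mono fun _ hx =>
      mem_mfullParam_of_forall_prime_dvd (by omega) hx
  obtain ⟨C, hC, hbound⟩ := hfull
  exact ⟨C, hC, fun X hX => hbound X (by linarith)⟩
end

section
/- Let m ≥ 2 be an integer, q a positive integer, and B ≥ 1. Then ∑_{v ≤ B^{1/(m+r)}, v squarefree} gcd(v^{km+kr}, q)^{1/(km)} / v^{(m+r)/m} ≪ q^ε for every ε > 0 and every 1 ≤ r ≤ m−1, where the implicit constant depends on ε, m, k, r but not on q or B. -/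
/-!
Since `gcd(v^N, q) ≤ gcd(v, q)^N` and `N / (km) = (m + r) / m =: s`, each term is at most
`(gcd(v, q) / v)^s`. Grouping the `v` by `d = gcd(v, q)` and writing `v = d w`, each group
contributes at most `ζ(s)`, which is finite because `r ≥ 1` gives `s > 1`. Hence the sum is at
most `τ(q) ζ(s)`, and the divisor bound `τ(q) ≪_ε q^ε` finishes the proof.
-/

open Finset Real

theorem succ_le_mul_two_rpow {ε : ℝ} (hε : 0 < ε) (e : ℕ) :
    (e + 1 : ℝ) ≤ (1 / (ε * log 2) + 1) * 2 ^ (e * ε) := by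
  set t := ε * log 2
  have ht : 0 < t := mul_pos hε (log_pos one_lt_two)
  have hexp : (2 : ℝ) ^ (e * ε) = exp (e * t) := by
    rw [rpow_def_of_pos two_pos]; congr 1; simp only [t]; ring
  rw [hexp, add_mul, one_mul, div_mul_eq_mul_div, one_mul]
  calc (e + 1 : ℝ) ≤ (e * t + 1) / t + 1 := by
        rw [add_div, mul_div_cancel_right₀ _ ht.ne']; linarith [one_div_pos.2 ht]
    _ ≤ exp (e * t) / t + exp (e * t) := by
        gcongr
        exacts [add_one_le_exp _, one_le_exp (by positivity)]

theorem succ_le_rpow_mul_of_two_le_rpow {p ε : ℝ} (hp : 0 ≤ p) (h : 2 ≤ p ^ ε) (e : ℕ) :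
    (e + 1 : ℝ) ≤ p ^ (e * ε) :=
  calc (e + 1 : ℝ) ≤ 2 ^ e := by exact_mod_cast Nat.lt_two_pow_self
    _ ≤ (p ^ ε) ^ e := by gcongr
    _ = p ^ (e * ε) := by rw [← rpow_natCast, ← rpow_mul hp, mul_comm]

theorem cast_rpow_eq_prod_primeFactors {n : ℕ} (hn : n ≠ 0) (x : ℝ) :
    (n : ℝ) ^ x = ∏ p ∈ n.primeFactors, (p : ℝ) ^ (n.factorization p * x) := by
  conv_lhs => rw [Nat.prod_primeFactors_pow_factorization hn]
  push_cast
  rw [← finsetProd_rpow _ _ fun p _ => by positivity]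
  refine prod_congr rfl fun p _ => ?_
  rw [← rpow_natCast, ← rpow_mul p.cast_nonneg]

theorem exists_card_divisors_le_mul_rpow {ε : ℝ} (hε : 0 < ε) :
    ∃ C : ℝ, 0 < C ∧ ∀ n : ℕ, (#n.divisors : ℝ) ≤ C * (n : ℝ) ^ ε := by
  set A := 1 / (ε * log 2) + 1
  have hA : 1 ≤ A := le_add_of_nonneg_left (by have := log_pos one_lt_two; positivity)
  -- only the primes below `X` can have `p ^ ε < 2`
  set X := ⌈(2 : ℝ) ^ (1 / ε)⌉₊
  have hprime_pow (p e : ℕ) (hp : 2 ≤ p) :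
      (e + 1 : ℝ) ≤ (if p < X then A else 1) * (p : ℝ) ^ (e * ε) := by
    split_ifs with hpX
    · refine (succ_le_mul_two_rpow hε e).trans ?_
      gcongr
      exact_mod_cast hp
    · rw [one_mul]
      refine succ_le_rpow_mul_of_two_le_rpow p.cast_nonneg ?_ e
      calc (2 : ℝ) = ((2 : ℝ) ^ (1 / ε)) ^ ε := by
            rw [← rpow_mul zero_le_two, one_div_mul_cancel hε.ne', rpow_one]
        _ ≤ (p : ℝ) ^ ε := by gcongr; exact Nat.ceil_le.1 (not_lt.1 hpX)
  refine ⟨A ^ X, by positivity, fun n => ?_⟩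
  rcases eq_or_ne n 0 with rfl | hn
  · simp [zero_rpow hε.ne']
  calc (#n.divisors : ℝ) = ∏ p ∈ n.primeFactors, ((n.factorization p : ℝ) + 1) := by
        rw [Nat.card_divisors hn]; push_cast; rfl
    _ ≤ ∏ p ∈ n.primeFactors, ((if p < X then A else 1) * (p : ℝ) ^ (n.factorization p * ε)) :=
        prod_le_prod (fun _ _ => by positivity)
          fun p hp => hprime_pow p _ (Nat.prime_of_mem_primeFactors hp).two_le
    _ = (∏ p ∈ n.primeFactors with p < X, A) *
          ∏ p ∈ n.primeFactors, (p : ℝ) ^ (n.factorization p * ε) := by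
        rw [prod_mul_distrib, prod_filter]
    _ ≤ A ^ X * (n : ℝ) ^ ε := by
        rw [prod_const, cast_rpow_eq_prod_primeFactors hn]
        gcongr
        exact (card_le_card fun p hp => mem_range.2 (mem_filter.1 hp).2).trans_eq
            (card_range X)

theorem gcd_pow_rpow_le {a b : ℕ} (hb : b ≠ 0) (n : ℕ) {x : ℝ} (hx : 0 ≤ x) :
    (Nat.gcd (a ^ n) b : ℝ) ^ x ≤ (Nat.gcd a b : ℝ) ^ (n * x) := by
  have hle : Nat.gcd (a ^ n) b ≤ Nat.gcd a b ^ n :=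
    Nat.le_of_dvd (pow_pos (Nat.gcd_pos_of_pos_right a (Nat.pos_of_ne_zero hb)) n)
      gcd_pow_left_dvd_pow_gcd
  rw [rpow_mul (Nat.cast_nonneg _), rpow_natCast]
  gcongr
  exact_mod_cast hle

theorem sum_div_rpow_le_tsum_of_dvd {d : ℕ} (hd : d ≠ 0) {T : Finset ℕ} (hT : ∀ v ∈ T, d ∣ v)
    {s : ℝ} (hs : 1 < s) : ∑ v ∈ T, ((d : ℝ) / v) ^ s ≤ ∑' n : ℕ, ((n : ℝ) ^ s)⁻¹ := by
  have hterm : ∀ v ∈ T, ((d : ℝ) / v) ^ s = (((v / d : ℕ) : ℝ) ^ s)⁻¹ := by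
    intro v hv
    obtain ⟨w, rfl⟩ := hT v hv
    rw [Nat.mul_div_cancel_left w (Nat.pos_of_ne_zero hd), Nat.cast_mul,
      div_mul_cancel_left₀ (Nat.cast_ne_zero.2 hd), inv_rpow w.cast_nonneg]
  have hinj : Set.InjOn (· / d) T := by
    intro v hv w hw hvw
    rw [← Nat.mul_div_cancel' (hT v hv), ← Nat.mul_div_cancel' (hT w hw)]
    exact congrArg (d * ·) hvw
  rw [sum_congr rfl hterm, ← sum_image (f := fun n : ℕ => ((n : ℝ) ^ s)⁻¹) hinj]
  exact (summable_nat_rpow_inv.2 hs).sum_le_tsum _ fun n _ => by positivity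

theorem sum_gcd_div_rpow_le {q : ℕ} (hq : q ≠ 0) (S : Finset ℕ) {s : ℝ} (hs : 1 < s) :
    ∑ v ∈ S, ((Nat.gcd v q : ℝ) / v) ^ s ≤ #q.divisors * ∑' n : ℕ, ((n : ℝ) ^ s)⁻¹ := by
  have hmaps : ∀ v ∈ S, Nat.gcd v q ∈ q.divisors := fun v _ =>
    Nat.mem_divisors.2 ⟨Nat.gcd_dvd_right v q, hq⟩
  rw [← sum_fiberwise_of_maps_to hmaps, ← nsmul_eq_mul, ← sum_const]
  refine sum_le_sum fun d hd => ?_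
  calc ∑ v ∈ S with Nat.gcd v q = d, ((Nat.gcd v q : ℝ) / v) ^ s
      = ∑ v ∈ S with Nat.gcd v q = d, ((d : ℝ) / v) ^ s :=
        sum_congr rfl fun v hv => by rw [(mem_filter.1 hv).2]
    _ ≤ _ := by
        refine sum_div_rpow_le_tsum_of_dvd (Nat.pos_of_mem_divisors hd).ne' (fun v hv => ?_) hs
        exact (mem_filter.1 hv).2 ▸ Nat.gcd_dvd_left v q

theorem gcd_sum_bound_general (m k r : ℕ) (hm : 2 ≤ m) (hk : 1 ≤ k) (hr : 1 ≤ r) :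
    ∀ ε : ℝ, 0 < ε → ∃ C : ℝ, 0 < C ∧ ∀ q : ℕ, 1 ≤ q → ∀ B : ℝ, 1 ≤ B →
      ∀ S : Finset ℕ, (∀ v ∈ S, Squarefree v ∧ (v : ℝ) ≤ B ^ ((1 : ℝ) / (m + r))) →
      ∑ v ∈ S, (Nat.gcd (v ^ (k * m + k * r)) q : ℝ) ^ ((1 : ℝ) / (k * m))
          / (v : ℝ) ^ (((m : ℝ) + r) / m)
        ≤ C * (q : ℝ) ^ ε := by
  intro ε hε
  obtain ⟨C, hC, hdiv⟩ := exists_card_divisors_le_mul_rpow hε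
  set s : ℝ := ((m : ℝ) + r) / m
  have hm₀ : (0 : ℝ) < m := by exact_mod_cast (by omega : 0 < m)
  have hs : 1 < s := by
    rw [one_lt_div hm₀]; exact lt_add_of_pos_right _ (by exact_mod_cast hr)
  have hexp : ((k * m + k * r : ℕ) : ℝ) * (1 / (k * m)) = s := by
    have hk₀ : (k : ℝ) ≠ 0 := by exact_mod_cast (by omega : k ≠ 0)
    push_cast; simp only [s]; field_simp
  set Z := ∑' n : ℕ, ((n : ℝ) ^ s)⁻¹
  have hZ : 0 ≤ Z := tsum_nonneg fun n => by positivity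
  refine ⟨C * (Z + 1), by positivity, fun q hq B _ S _ => ?_⟩
  have hq₀ : q ≠ 0 := by omega
  calc ∑ v ∈ S, (Nat.gcd (v ^ (k * m + k * r)) q : ℝ) ^ ((1 : ℝ) / (k * m)) / (v : ℝ) ^ s
      ≤ ∑ v ∈ S, ((Nat.gcd v q : ℝ) / v) ^ s := sum_le_sum fun v _ => by
        rw [div_rpow (Nat.cast_nonneg _) (Nat.cast_nonneg _), ← hexp]
        gcongr
        exact gcd_pow_rpow_le hq₀ _ (by positivity)
    _ ≤ #q.divisors * Z := sum_gcd_div_rpow_le hq₀ S hs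
    _ ≤ C * (q : ℝ) ^ ε * Z := by gcongr; exact hdiv q
    _ ≤ C * (Z + 1) * (q : ℝ) ^ ε := by
        have : 0 ≤ C * (q : ℝ) ^ ε := by positivity
        nlinarith

/-- For `m ≥ 2`, `k ≥ 1` and `1 ≤ r ≤ m − 1`: for every `ε > 0` there is a constant `C`
such that for all `q ≥ 1` and `B ≥ 1`, the sum over squarefree `v ≤ B^{1/(m+r)}` of
`gcd(v^{km+kr}, q)^{1/(km)} / v^{(m+r)/m}` is at most `C·q^ε`. -/
theorem gcd_sum_bound (m k r : ℕ) (hm : 2 ≤ m) (hk : 1 ≤ k) (hr : 1 ≤ r) (hr' : r ≤ m - 1) :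
    ∀ ε : ℝ, 0 < ε → ∃ C : ℝ, 0 < C ∧ ∀ q : ℕ, 1 ≤ q → ∀ B : ℝ, 1 ≤ B →
      ∀ S : Finset ℕ, (∀ v ∈ S, Squarefree v ∧ (v : ℝ) ≤ B ^ ((1 : ℝ) / (m + r))) →
      ∑ v ∈ S, (Nat.gcd (v ^ (k * m + k * r)) q : ℝ) ^ ((1 : ℝ) / (k * m))
          / (v : ℝ) ^ (((m : ℝ) + r) / m)
        ≤ C * (q : ℝ) ^ ε :=
  gcd_sum_bound_general m k r hm hk hr
end
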